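/- arXiv:1102.1494 — 8 statements merged into one kernel-verified Lean document; each statement's English description precedes it below -/
import Mathlib

section
/- Let n ≥ 1 and let λ₁, …, λₙ be pairwise distinct complex numbers, and let Λ = diag(λ₁, …, λₙ) ∈ Mat_n(ℂ). Then the map u ↦ uΛu⁻¹ − Λ is a bijection from the group of lower unitriangular n×n complex matrices onto the set of strictly lower triangular n×n complex matrices. Equivalently, for every strictly lower triangular Y ∈ Mat_n(ℂ) there exists a unique lower unitriangular u with uΛu⁻¹ = Λ + Y. -/
open Matrix

/-- A lower unitriangular complex matrix: lower triangular with all diagonal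
entries equal to `1`. -/
def IsLowerUnitriangular {n : ℕ} (u : Matrix (Fin n) (Fin n) ℂ) : Prop :=
  (∀ i, u i i = 1) ∧ ∀ i j : Fin n, i < j → u i j = 0

/-- A strictly lower triangular complex matrix: lower triangular with all
diagonal entries equal to `0`. -/
def IsStrictlyLowerTriangular {n : ℕ} (Y : Matrix (Fin n) (Fin n) ℂ) : Prop :=
  ∀ i j : Fin n, i ≤ j → Y i j = 0

section Aux

open Finset

variable {n : ℕ}

lemma lut_blockTriangular {u : Matrix (Fin n) (Fin n) ℂ}
    (h : ∀ i j : Fin n, i < j → u i j = 0) :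
    u.BlockTriangular (OrderDual.toDual : Fin n → (Fin n)ᵒᵈ) := by
  intro i j hij
  exact h i j (by exact_mod_cast hij)

lemma lut_det {u : Matrix (Fin n) (Fin n) ℂ} (hu : IsLowerUnitriangular u) :
    u.det = 1 := by
  rw [Matrix.det_of_lowerTriangular u (lut_blockTriangular hu.2)]
  simp [hu.1]

noncomputable def lut_invertible {u : Matrix (Fin n) (Fin n) ℂ}
    (hu : IsLowerUnitriangular u) : Invertible u :=
  u.invertibleOfIsUnitDet (by simp [lut_det hu])

/-- Solution of the recursion `(λⱼ - λᵢ) u i j = ∑_{k<i} Y i k * u k j`. -/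
noncomputable def usol (lam : Fin n → ℂ) (Y : Matrix (Fin n) (Fin n) ℂ) :
    Fin n → Fin n → ℂ
  | i => fun j =>
    if i = j then 1
    else if (i : ℕ) < (j : ℕ) then 0
    else (∑ k : Fin n, if _h : (k : ℕ) < (i : ℕ) then Y i k * usol lam Y k j else 0)
        / (lam j - lam i)
termination_by i => (i : ℕ)
decreasing_by exact _h

lemma usol_diag (lam : Fin n → ℂ) (Y : Matrix (Fin n) (Fin n) ℂ) (i : Fin n) :
    usol lam Y i i = 1 := by rw [usol]; simp

lemma usol_upper (lam : Fin n → ℂ) (Y : Matrix (Fin n) (Fin n) ℂ) {i j : Fin n}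
    (hij : i < j) : usol lam Y i j = 0 := by
  rw [usol]
  simp [Fin.ne_of_lt hij, hij, (Fin.lt_iff_val_lt_val.mp hij)]

lemma usol_lut (lam : Fin n → ℂ) (Y : Matrix (Fin n) (Fin n) ℂ) :
    IsLowerUnitriangular (Matrix.of (usol lam Y)) :=
  ⟨usol_diag lam Y, fun _ _ hij => usol_upper lam Y hij⟩

lemma usol_lower (lam : Fin n → ℂ) (Y : Matrix (Fin n) (Fin n) ℂ) {i j : Fin n}
    (hij : j < i) :
    usol lam Y i j =
      (∑ k : Fin n, if _h : (k : ℕ) < (i : ℕ) then Y i k * usol lam Y k j else 0)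
        / (lam j - lam i) := by
  rw [usol]
  have h1 : ¬ i = j := (Fin.ne_of_lt hij).symm
  have h2 : ¬ (i : ℕ) < (j : ℕ) := by omega
  simp [h1, h2]

/-- The key equation `u * Λ = (Λ + Y) * u` for `u = usol`. -/
lemma usol_eqn (lam : Fin n → ℂ) (hlam : Function.Injective lam)
    (Y : Matrix (Fin n) (Fin n) ℂ) (hY : IsStrictlyLowerTriangular Y) :
    (Matrix.of (usol lam Y)) * diagonal lam =
      (diagonal lam + Y) * (Matrix.of (usol lam Y)) := by
  set u : Matrix (Fin n) (Fin n) ℂ := Matrix.of (usol lam Y) with hu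
  ext i j
  have hYu : (Y * u) i j = ∑ k : Fin n,
      if _h : (k : ℕ) < (i : ℕ) then Y i k * usol lam Y k j else 0 := by
    rw [Matrix.mul_apply]
    refine Finset.sum_congr rfl fun k _ => ?_
    by_cases hk : (k : ℕ) < (i : ℕ)
    · simp [hk, hu]
    · have : Y i k = 0 := hY i k (by exact_mod_cast not_lt.mp hk)
      simp [hk, this]
  have hlhs : (u * diagonal lam) i j = usol lam Y i j * lam j := by
    simp [hu, Matrix.mul_diagonal]
  have hrhs : ((diagonal lam + Y) * u) i j
      = lam i * usol lam Y i j + (Y * u) i j := by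
    rw [Matrix.add_mul]
    simp [hu, Matrix.diagonal_mul]
  rw [hlhs, hrhs]
  rcases lt_trichotomy i j with hij | hij | hij
  · -- i < j : everything vanishes
    rw [usol_upper lam Y hij, hYu, Finset.sum_eq_zero]
    · ring
    intro k _
    by_cases hk : (k : ℕ) < (i : ℕ)
    · have : usol lam Y k j = 0 := usol_upper lam Y (by
        exact Fin.lt_iff_val_lt_val.mpr (by
          have := Fin.lt_iff_val_lt_val.mp hij; omega))
      simp [hk, this]
    · simp [hk]
  · -- i = j
    subst hij
    rw [usol_diag, hYu, Finset.sum_eq_zero]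
    · ring
    intro k _
    by_cases hk : (k : ℕ) < (i : ℕ)
    · have : usol lam Y k i = 0 := usol_upper lam Y (Fin.lt_iff_val_lt_val.mpr hk)
      simp [hk, this]
    · simp [hk]
  · -- j < i
    have hd : lam j - lam i ≠ 0 := by
      have : j ≠ i := Fin.ne_of_lt hij
      exact sub_ne_zero.mpr fun h => this (hlam h)
    rw [usol_lower lam Y hij, hYu]
    field_simp
    ring

/-- Uniqueness: any two lower unitriangular solutions of `u Λ = (Λ + Y) u`
coincide. -/
lemma lut_unique (lam : Fin n → ℂ) (hlam : Function.Injective lam)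
    (Y : Matrix (Fin n) (Fin n) ℂ) (hY : IsStrictlyLowerTriangular Y)
    {u v : Matrix (Fin n) (Fin n) ℂ}
    (hu : IsLowerUnitriangular u) (hv : IsLowerUnitriangular v)
    (hequ : u * diagonal lam = (diagonal lam + Y) * u)
    (heqv : v * diagonal lam = (diagonal lam + Y) * v) : u = v := by
  have key : ∀ m : ℕ, ∀ i j : Fin n, (i : ℕ) < m → u i j = v i j := by
    intro m
    induction m with
    | zero => intro i j h; omega
    | succ m ih =>
      intro i j h
      rcases lt_or_ge (i : ℕ) m with h' | h'
      · exact ih i j h'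
      have him : (i : ℕ) = m := by omega
      rcases lt_trichotomy i j with hij | hij | hij
      · rw [hu.2 i j hij, hv.2 i j hij]
      · subst hij; rw [hu.1 i, hv.1 i]
      · -- j < i : use the matrix equations
        have e : ∀ w : Matrix (Fin n) (Fin n) ℂ,
            w * diagonal lam = (diagonal lam + Y) * w →
            w i j * lam j = lam i * w i j + ∑ k : Fin n, Y i k * w k j := by
          intro w hw
          have := congrFun (congrFun hw i) j
          rw [Matrix.mul_diagonal] at this
          rw [this, Matrix.add_mul, Matrix.add_apply, Matrix.diagonal_mul,
            Matrix.mul_apply]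
        have eu := e u hequ
        have ev := e v heqv
        have hsum : (∑ k : Fin n, Y i k * u k j) = ∑ k : Fin n, Y i k * v k j := by
          refine Finset.sum_congr rfl fun k _ => ?_
          by_cases hk : (k : ℕ) < (i : ℕ)
          · rw [ih k j (by omega)]
          · rw [hY i k (by exact_mod_cast not_lt.mp hk)]; ring
        have hd : lam j - lam i ≠ 0 := by
          have : j ≠ i := Fin.ne_of_lt hij
          exact sub_ne_zero.mpr fun hh => this (hlam hh)
        have : (lam j - lam i) * u i j = (lam j - lam i) * v i j := by
          have h1 : (lam j - lam i) * u i j = ∑ k : Fin n, Y i k * u k j := by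
            linear_combination eu
          have h2 : (lam j - lam i) * v i j = ∑ k : Fin n, Y i k * v k j := by
            linear_combination ev
          rw [h1, h2, hsum]
        exact mul_left_cancel₀ hd this
  ext i j
  exact key n i j i.isLt

end Aux

/-- For `Λ = diag(λ₁, …, λₙ)` with pairwise distinct eigenvalues, the map
`u ↦ uΛu⁻¹ − Λ` is a bijection from lower unitriangular matrices onto strictly
lower triangular matrices; equivalently, for every strictly lower triangular `Y`
there is a unique lower unitriangular `u` with `uΛu⁻¹ = Λ + Y`. -/
theorem lowerUnitriangular_conj_diagonal_bijective
    (n : ℕ) (hn : 1 ≤ n) (lam : Fin n → ℂ) (hlam : Function.Injective lam) :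
    (∀ u : Matrix (Fin n) (Fin n) ℂ, IsLowerUnitriangular u →
        IsStrictlyLowerTriangular (u * diagonal lam * u⁻¹ - diagonal lam)) ∧
    (∀ Y : Matrix (Fin n) (Fin n) ℂ, IsStrictlyLowerTriangular Y →
        ∃! u : Matrix (Fin n) (Fin n) ℂ,
          IsLowerUnitriangular u ∧ u * diagonal lam * u⁻¹ = diagonal lam + Y) := by
  constructor
  · -- forward direction
    intro u hu
    haveI : Invertible u := lut_invertible hu
    have hbu := lut_blockTriangular hu.2
    have hbi : (u⁻¹).BlockTriangular (OrderDual.toDual : Fin n → (Fin n)ᵒᵈ) :=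
      Matrix.blockTriangular_inv_of_blockTriangular hbu
    have hbd : (diagonal lam).BlockTriangular
        (OrderDual.toDual : Fin n → (Fin n)ᵒᵈ) := by
      intro i j hij
      have hij' : i < j := by exact_mod_cast hij
      exact Matrix.diagonal_apply_ne _ (Fin.ne_of_lt hij')
    have hprod := (hbu.mul hbd).mul hbi
    have hinv_low : ∀ i j : Fin n, i < j → u⁻¹ i j = 0 := by
      intro i j hij
      exact hbi (by exact_mod_cast hij)
    have hinv_diag : ∀ i : Fin n, u⁻¹ i i = 1 := by
      intro i
      have h1 : (u⁻¹ * u) i i = 1 := by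
        rw [Matrix.inv_mul_of_invertible]; simp
      rw [Matrix.mul_apply, Finset.sum_eq_single i] at h1
      · rw [hu.1 i, mul_one] at h1; exact h1
      · intro k _ hk
        rcases lt_or_gt_of_ne hk with h | h
        · rw [hu.2 k i h, mul_zero]
        · rw [hinv_low i k h, zero_mul]
      · intro h; exact absurd (Finset.mem_univ i) h
    intro i j hij
    rcases lt_or_eq_of_le hij with hij | hij
    · rw [Matrix.sub_apply, hprod (by exact_mod_cast hij),
        Matrix.diagonal_apply_ne _ (Fin.ne_of_lt hij), sub_zero]
    · subst hij
      rw [Matrix.sub_apply, Matrix.diagonal_apply_eq]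
      have : (u * diagonal lam * u⁻¹) i i = lam i := by
        rw [Matrix.mul_apply, Finset.sum_eq_single i]
        · rw [Matrix.mul_diagonal, hu.1 i, hinv_diag i]; ring
        · intro k _ hk
          rcases lt_or_gt_of_ne hk with h | h
          · rw [hinv_low k i h, mul_zero]
          · rw [Matrix.mul_diagonal, hu.2 i k h, zero_mul, zero_mul]
        · intro h; exact absurd (Finset.mem_univ i) h
      rw [this, sub_self]
  · -- existence and uniqueness
    intro Y hY
    refine ⟨Matrix.of (usol lam Y), ⟨usol_lut lam Y, ?_⟩, ?_⟩
    · haveI : Invertible (Matrix.of (usol lam Y)) := lut_invertible (usol_lut lam Y)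
      rw [usol_eqn lam hlam Y hY, Matrix.mul_inv_cancel_right_of_invertible]
    · rintro v ⟨hv, heqv⟩
      haveI : Invertible v := lut_invertible hv
      have heqv' : v * diagonal lam = (diagonal lam + Y) * v := by
        have := congrArg (· * v) heqv
        simpa [Matrix.inv_mul_cancel_right_of_invertible] using this
      exact lut_unique lam hlam Y hY hv (usol_lut lam Y) heqv'
        (usol_eqn lam hlam Y hY)
end

section
/- Let p, q ≥ 1, let a ∈ Mat_{p,p}(ℂ), b ∈ Mat_{p,q}(ℂ), c ∈ Mat_{q,p}(ℂ), d ∈ Mat_{q,q}(ℂ), z ∈ Mat_{p,q}(ℂ), w ∈ Mat_{q,p}(ℂ), and assume that cz + d is invertible and that â := a − (az + b)(cz + d)⁻¹c is invertible. Set ẑ := (az + b)(cz + d)⁻¹, ŵ := (c + (cz + d)w)â⁻¹, and d̂ := cz + d. Then, as (p+q)×(p+q) block matrices, fromBlocks a b c d · fromBlocks 1 z 0 1 · fromBlocks 1 0 w 1 = fromBlocks 1 ẑ 0 1 · fromBlocks 1 0 ŵ 1 · fromBlocks â 0 0 d̂. -/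
open Matrix

/-- Gauss-type factorization `g·u_z·u⁻_w = u_{g.z}·u⁻_{ŵ}·t` of block matrices
in the `SU(p,q)` (Grassmannian) example. -/
theorem gauss_factorization_blocks (p q : ℕ) (hp : 1 ≤ p) (hq : 1 ≤ q)
    (a : Matrix (Fin p) (Fin p) ℂ) (b : Matrix (Fin p) (Fin q) ℂ)
    (c : Matrix (Fin q) (Fin p) ℂ) (d : Matrix (Fin q) (Fin q) ℂ)
    (z : Matrix (Fin p) (Fin q) ℂ) (w : Matrix (Fin q) (Fin p) ℂ)
    (hcd : IsUnit (c * z + d))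
    (hat : IsUnit (a - (a * z + b) * (c * z + d)⁻¹ * c)) :
    fromBlocks a b c d * fromBlocks 1 z 0 1 * fromBlocks 1 0 w 1 =
      fromBlocks 1 ((a * z + b) * (c * z + d)⁻¹) 0 1 *
        fromBlocks 1 0
          ((c + (c * z + d) * w) * (a - (a * z + b) * (c * z + d)⁻¹ * c)⁻¹) 1 *
        fromBlocks (a - (a * z + b) * (c * z + d)⁻¹ * c) 0 0 (c * z + d) := by
  have hD : (c * z + d)⁻¹ * (c * z + d) = 1 :=
    Matrix.nonsing_inv_mul _ ((Matrix.isUnit_iff_isUnit_det _).mp hcd)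
  have hA : (a - (a * z + b) * (c * z + d)⁻¹ * c)⁻¹ *
      (a - (a * z + b) * (c * z + d)⁻¹ * c) = 1 :=
    Matrix.nonsing_inv_mul _ ((Matrix.isUnit_iff_isUnit_det _).mp hat)
  have hZD : (a * z + b) * (c * z + d)⁻¹ * (c * z + d) = a * z + b := by
    rw [Matrix.mul_assoc, hD, Matrix.mul_one]
  have hWA : (c + (c * z + d) * w) * (a - (a * z + b) * (c * z + d)⁻¹ * c)⁻¹ *
      (a - (a * z + b) * (c * z + d)⁻¹ * c) = c + (c * z + d) * w := by
    rw [Matrix.mul_assoc, hA, Matrix.mul_one]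
  simp only [Matrix.fromBlocks_multiply, Matrix.mul_one, Matrix.one_mul,
    Matrix.mul_zero, Matrix.zero_mul, add_zero, zero_add]
  rw [Matrix.fromBlocks_inj]
  refine ⟨?_, ?_, ?_, rfl⟩
  · conv_rhs => rw [Matrix.add_mul, Matrix.one_mul]
    rw [Matrix.mul_assoc ((a * z + b) * (c * z + d)⁻¹) _ _, hWA, Matrix.mul_add,
      ← Matrix.mul_assoc, hZD, Matrix.add_mul]
    abel
  · exact hZD.symm
  · exact hWA.symm
end

section
/- Let p, q ≥ 1, let a ∈ Mat_{p,p}(ℂ), b ∈ Mat_{p,q}(ℂ), c ∈ Mat_{q,p}(ℂ), d ∈ Mat_{q,q}(ℂ). Then the map F : Mat_{p,q}(ℂ) → Mat_{p,q}(ℂ), F(z) = (az + b)(cz + d)⁻¹, is complex differentiable at every point z at which cz + d is invertible, and its derivative at such a z, applied to a direction v ∈ Mat_{p,q}(ℂ), equals (a − (az + b)(cz + d)⁻¹c) · v · (cz + d)⁻¹. -/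
/-!
Both factors of `z ↦ (a z + b)(c z + d)⁻¹` are differentiable: the numerator is affine, and the
inverse of a square matrix has derivative `V ↦ -A⁻¹ V A⁻¹` at an invertible `A`, as in any complete
normed algebra. The product rule for matrix multiplication then gives the derivative
`v ↦ a v u⁻¹ - (a z + b) u⁻¹ c v u⁻¹` with `u = c z + d`, which factors as `(a - F(z) c) v u⁻¹`.
-/

open Matrix

attribute [local instance] Matrix.normedAddCommGroup Matrix.normedSpace

namespace Matrix

variable {𝕜 : Type*} [NontriviallyNormedField 𝕜] [CompleteSpace 𝕜] {l m n : Type*}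

noncomputable def mulLeftCLM [Fintype m] [Fintype n] (X : Matrix l m 𝕜) :
    Matrix m n 𝕜 →L[𝕜] Matrix l n 𝕜 :=
  (mulLeftLinearMap n 𝕜 X).toContinuousLinearMap

noncomputable def mulRightCLM [Fintype l] [Fintype m] (Y : Matrix m n 𝕜) :
    Matrix l m 𝕜 →L[𝕜] Matrix l n 𝕜 :=
  (mulRightLinearMap l 𝕜 Y).toContinuousLinearMap

noncomputable def mulCLM [Fintype l] [Fintype m] [Fintype n] :
    Matrix l m 𝕜 →L[𝕜] Matrix m n 𝕜 →L[𝕜] Matrix l n 𝕜 :=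
  (LinearMap.toContinuousLinearMap.toLinearMap ∘ₗ mulLinearMap 𝕜).toContinuousLinearMap

theorem _root_.HasFDerivAt.matrix_mul [Fintype l] [Fintype m] [Fintype n]
    {E : Type*} [NormedAddCommGroup E] [NormedSpace 𝕜 E]
    {f : E → Matrix l m 𝕜} {g : E → Matrix m n 𝕜} {f' : E →L[𝕜] Matrix l m 𝕜}
    {g' : E →L[𝕜] Matrix m n 𝕜} {x : E} (hf : HasFDerivAt f f' x) (hg : HasFDerivAt g g' x) :
    HasFDerivAt (fun y ↦ f y * g y)
      ((mulLeftCLM (f x)).comp g' + (mulRightCLM (g x)).comp f') x :=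
  mulCLM.hasFDerivAt_of_bilinear hf hg

/- The sup norm is not submultiplicative, so we borrow the normed algebra structure of the
`linftyOp` norm; `HasFDerivAt` only sees the topology, which the two norms share. -/
theorem hasFDerivAt_inv [Fintype n] [DecidableEq n] {A : Matrix n n 𝕜} (hA : IsUnit A) :
    HasFDerivAt (fun M : Matrix n n 𝕜 ↦ M⁻¹) (-(mulLeftCLM A⁻¹).comp (mulRightCLM A⁻¹)) A := by
  let _ := Matrix.linftyOpNormedRing (n := n) (α := 𝕜)
  let _ := Matrix.linftyOpNormedAlgebra (n := n) (R := 𝕜) (α := 𝕜)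
  have _ : HasSummableGeomSeries (Matrix n n 𝕜) :=
    -- completeness for the uniformity of the borrowed norm, not `Matrix.instUniformSpace`
    have := @FiniteDimensional.complete 𝕜 (Matrix n n 𝕜) _ _ _ PseudoMetricSpace.toUniformSpace
      _ _ _ _ _
    inferInstance
  obtain ⟨u, rfl⟩ := hA
  simp only [nonsing_inv_eq_ringInverse, Ring.inverse_unit]
  refine (hasFDerivAt_ringInverse u).congr_fderiv ?_
  ext V : 1
  change -(_ * V * _) = -(_ * (V * _))
  rw [Matrix.mul_assoc]

end Matrix

theorem moebius_hasFDerivAt_general (p q : ℕ)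
    (a : Matrix (Fin p) (Fin p) ℂ) (b : Matrix (Fin p) (Fin q) ℂ)
    (c : Matrix (Fin q) (Fin p) ℂ) (d : Matrix (Fin q) (Fin q) ℂ)
    (z : Matrix (Fin p) (Fin q) ℂ) (hcd : IsUnit (c * z + d)) :
    ∃ F' : Matrix (Fin p) (Fin q) ℂ →L[ℂ] Matrix (Fin p) (Fin q) ℂ,
      HasFDerivAt (fun z : Matrix (Fin p) (Fin q) ℂ =>
          (a * z + b) * (c * z + d)⁻¹) F' z ∧
      ∀ v : Matrix (Fin p) (Fin q) ℂ,
        F' v = (a - (a * z + b) * (c * z + d)⁻¹ * c) * v * (c * z + d)⁻¹ := by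
  have hnum : HasFDerivAt (fun z ↦ a * z + b) (mulLeftCLM a) z :=
    (mulLeftCLM a).hasFDerivAt.add_const b
  have hden := (hasFDerivAt_inv hcd).comp z ((mulLeftCLM c).hasFDerivAt.add_const d)
  refine ⟨_, hnum.matrix_mul hden, fun v ↦ ?_⟩
  change (a * z + b) * -((c * z + d)⁻¹ * (c * v * (c * z + d)⁻¹)) + a * v * (c * z + d)⁻¹ = _
  simp only [Matrix.sub_mul, Matrix.mul_neg, Matrix.mul_assoc]
  abel

/-- The generalized fractional-linear (Möbius) map
`F(z) = (az + b)(cz + d)⁻¹` on `p×q` matrices is complex differentiable at any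
point `z` where `cz + d` is invertible, with derivative
`v ↦ (a − (az + b)(cz + d)⁻¹ c) · v · (cz + d)⁻¹`. -/
theorem moebius_hasFDerivAt (p q : ℕ) (hp : 1 ≤ p) (hq : 1 ≤ q)
    (a : Matrix (Fin p) (Fin p) ℂ) (b : Matrix (Fin p) (Fin q) ℂ)
    (c : Matrix (Fin q) (Fin p) ℂ) (d : Matrix (Fin q) (Fin q) ℂ)
    (z : Matrix (Fin p) (Fin q) ℂ) (hcd : IsUnit (c * z + d)) :
    ∃ F' : Matrix (Fin p) (Fin q) ℂ →L[ℂ] Matrix (Fin p) (Fin q) ℂ,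
      HasFDerivAt (fun z : Matrix (Fin p) (Fin q) ℂ =>
          (a * z + b) * (c * z + d)⁻¹) F' z ∧
      ∀ v : Matrix (Fin p) (Fin q) ℂ,
        F' v = (a - (a * z + b) * (c * z + d)⁻¹ * c) * v * (c * z + d)⁻¹ :=
  moebius_hasFDerivAt_general p q a b c d z hcd
end

section
/- Let p, q ≥ 1 and let g = fromBlocks a b c d and g' = fromBlocks a' b' c' d' be (p+q)×(p+q) complex block matrices, and let z ∈ Mat_{p,q}(ℂ). Assume c'z + d' is invertible and, setting z' := (a'z + b')(c'z + d')⁻¹, assume cz' + d is invertible. Write gg' = fromBlocks a'' b'' c'' d''. Then c''z + d'' = (cz' + d)(c'z + d'), in particular c''z + d'' is invertible, and (a''z + b'')(c''z + d'')⁻¹ = (az' + b)(cz' + d)⁻¹; that is, (gg').z = g.(g'.z) for the generalized fractional-linear action g.z := (az + b)(cz + d)⁻¹. -/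
open Matrix

/-- Composition law `(gg').z = g.(g'.z)` for the generalized fractional-linear
action `g.z := (az + b)(cz + d)⁻¹` of block matrices on `p×q` matrices,
together with the cocycle property of the denominator. -/
theorem moebius_action_comp (p q : ℕ) (hp : 1 ≤ p) (hq : 1 ≤ q)
    (a : Matrix (Fin p) (Fin p) ℂ) (b : Matrix (Fin p) (Fin q) ℂ)
    (c : Matrix (Fin q) (Fin p) ℂ) (d : Matrix (Fin q) (Fin q) ℂ)
    (a' : Matrix (Fin p) (Fin p) ℂ) (b' : Matrix (Fin p) (Fin q) ℂ)
    (c' : Matrix (Fin q) (Fin p) ℂ) (d' : Matrix (Fin q) (Fin q) ℂ)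
    (a'' : Matrix (Fin p) (Fin p) ℂ) (b'' : Matrix (Fin p) (Fin q) ℂ)
    (c'' : Matrix (Fin q) (Fin p) ℂ) (d'' : Matrix (Fin q) (Fin q) ℂ)
    (z : Matrix (Fin p) (Fin q) ℂ)
    (hmul : fromBlocks a b c d * fromBlocks a' b' c' d' =
      fromBlocks a'' b'' c'' d'')
    (h' : IsUnit (c' * z + d'))
    (h : IsUnit (c * ((a' * z + b') * (c' * z + d')⁻¹) + d)) :
    let z' : Matrix (Fin p) (Fin q) ℂ := (a' * z + b') * (c' * z + d')⁻¹
    c'' * z + d'' = (c * z' + d) * (c' * z + d') ∧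
    IsUnit (c'' * z + d'') ∧
    (a'' * z + b'') * (c'' * z + d'')⁻¹ = (a * z' + b) * (c * z' + d)⁻¹ := by
  intro z'
  rw [fromBlocks_multiply] at hmul
  have ha'' : a'' = a * a' + b * c' := (congrArg (toBlocks₁₁ ·) hmul).symm
  have hb'' : b'' = a * b' + b * d' := (congrArg (toBlocks₁₂ ·) hmul).symm
  have hc'' : c'' = c * a' + d * c' := (congrArg (toBlocks₂₁ ·) hmul).symm
  have hd'' : d'' = c * b' + d * d' := (congrArg (toBlocks₂₂ ·) hmul).symm
  have hdet' : IsUnit (c' * z + d').det := (Matrix.isUnit_iff_isUnit_det _).mp h'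
  have hz' : z' * (c' * z + d') = a' * z + b' :=
    Matrix.nonsing_inv_mul_cancel_right _ _ hdet'
  have hden : c'' * z + d'' = (c * z' + d) * (c' * z + d') := by
    rw [hc'', hd'', show (c * z' + d) * (c' * z + d') = c * (a' * z + b') + d * (c' * z + d')
      from by rw [Matrix.add_mul, Matrix.mul_assoc, hz']]
    simp only [Matrix.add_mul, Matrix.mul_add, Matrix.mul_assoc]
    abel
  have hnum : a'' * z + b'' = (a * z' + b) * (c' * z + d') := by
    rw [ha'', hb'', show (a * z' + b) * (c' * z + d') = a * (a' * z + b') + b * (c' * z + d')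
      from by rw [Matrix.add_mul, Matrix.mul_assoc, hz']]
    simp only [Matrix.add_mul, Matrix.mul_add, Matrix.mul_assoc]
    abel
  refine ⟨hden, ?_, ?_⟩
  · rw [hden]; exact h.mul h'
  · rw [hden, hnum, Matrix.mul_inv_rev, ← Matrix.mul_assoc,
      Matrix.mul_assoc _ (c' * z + d'), Matrix.mul_nonsing_inv _ hdet',
      Matrix.mul_one]
end

section
/- Fix s ∈ ℂ. For g = [[a, b], [c, d]] ∈ SL₂(ℂ) and z ∈ ℂ with cz + d ≠ 0, define g.z := (az + b)/(cz + d) and ψ_g(z, ξ) := (cz + d)²ξ − s·c·(cz + d) for ξ ∈ ℂ. Then for all g = [[a, b], [c, d]], h = [[a', b'], [c', d']] ∈ SL₂(ℂ) and z, ξ ∈ ℂ such that c'z + d' ≠ 0 and c·(h.z) + d ≠ 0, one has ψ_g(h.z, ψ_h(z, ξ)) = ψ_{gh}(z, ξ). -/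
open Matrix

/-- The Möbius action of a `2×2` matrix `[[a, b], [c, d]]` on `ℂ`:
`g.z = (az + b)/(cz + d)`. -/
noncomputable def moebius (m : Matrix (Fin 2) (Fin 2) ℂ) (z : ℂ) : ℂ :=
  (m 0 0 * z + m 0 1) / (m 1 0 * z + m 1 1)

/-- The `λ`-twisted affine fiber transformation on cotangent vectors:
`ψ_g(z, ξ) = (cz + d)²ξ − s·c·(cz + d)` for `g = [[a, b], [c, d]]`. -/
def psiTwist (s : ℂ) (m : Matrix (Fin 2) (Fin 2) ℂ) (z ξ : ℂ) : ℂ :=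
  (m 1 0 * z + m 1 1) ^ 2 * ξ - s * (m 1 0) * (m 1 0 * z + m 1 1)

/-!
With `j(g, z) = cz + d` we have `ψ_g(z, ξ) = j(g, z)² ξ - s·c·j(g, z)`, and `c / j(g, z)` is the
logarithmic derivative of `j(g, ·)`. The claim therefore follows from the automorphy cocycle
`j(gh, z) = j(g, h.z) · j(h, z)` together with its logarithmic derivative, which (using
`(h.z)' = det h / j(h, z)²`) reads `(gh)₁₀ · j(h, z) = h₁₀ · j(gh, z) + g₁₀ · det h`.
-/

def moebiusDenom {R : Type*} [CommRing R] (m : Matrix (Fin 2) (Fin 2) R) (z : R) : R :=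
  m 1 0 * z + m 1 1

theorem psiTwist_eq (s : ℂ) (m : Matrix (Fin 2) (Fin 2) ℂ) (z ξ : ℂ) :
    psiTwist s m z ξ = moebiusDenom m z ^ 2 * ξ - s * m 1 0 * moebiusDenom m z :=
  rfl

theorem moebiusDenom_mul (g h : Matrix (Fin 2) (Fin 2) ℂ) {z : ℂ} (hz : moebiusDenom h z ≠ 0) :
    moebiusDenom (g * h) z = moebiusDenom g (moebius h z) * moebiusDenom h z := by
  unfold moebiusDenom at *
  simp only [moebius, mul_apply, Fin.sum_univ_two]
  field_simp
  ring

theorem mul_apply_one_zero_mul_moebiusDenom {R : Type*} [CommRing R]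
    (g h : Matrix (Fin 2) (Fin 2) R) (z : R) :
    (g * h) 1 0 * moebiusDenom h z = h 1 0 * moebiusDenom (g * h) z + g 1 0 * h.det := by
  simp only [moebiusDenom, mul_apply, Fin.sum_univ_two, det_fin_two]
  ring

theorem psiTwist_cocycle_general (s : ℂ) (g h : Matrix.SpecialLinearGroup (Fin 2) ℂ)
    (z ξ : ℂ)
    (hh : (h : Matrix (Fin 2) (Fin 2) ℂ) 1 0 * z +
      (h : Matrix (Fin 2) (Fin 2) ℂ) 1 1 ≠ 0) :
    psiTwist s (g : Matrix (Fin 2) (Fin 2) ℂ)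
        (moebius (h : Matrix (Fin 2) (Fin 2) ℂ) z)
        (psiTwist s (h : Matrix (Fin 2) (Fin 2) ℂ) z ξ) =
      psiTwist s ((g * h : Matrix.SpecialLinearGroup (Fin 2) ℂ) :
        Matrix (Fin 2) (Fin 2) ℂ) z ξ := by
  have log_deriv := mul_apply_one_zero_mul_moebiusDenom (g : Matrix (Fin 2) (Fin 2) ℂ) h z
  rw [h.det_coe, mul_one, moebiusDenom_mul _ _ hh] at log_deriv
  rw [Matrix.SpecialLinearGroup.coe_mul, psiTwist_eq, psiTwist_eq, psiTwist_eq,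
    moebiusDenom_mul _ _ hh]
  linear_combination s * moebiusDenom g (moebius h z) * log_deriv

/-- Cocycle property `ψ_g(h.z, ψ_h(z, ξ)) = ψ_{gh}(z, ξ)` of the twisted affine
fiber transformation for `SL₂(ℂ)`. -/
theorem psiTwist_cocycle (s : ℂ) (g h : Matrix.SpecialLinearGroup (Fin 2) ℂ)
    (z ξ : ℂ)
    (hh : (h : Matrix (Fin 2) (Fin 2) ℂ) 1 0 * z +
      (h : Matrix (Fin 2) (Fin 2) ℂ) 1 1 ≠ 0)
    (hg : (g : Matrix (Fin 2) (Fin 2) ℂ) 1 0 *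
        moebius (h : Matrix (Fin 2) (Fin 2) ℂ) z +
      (g : Matrix (Fin 2) (Fin 2) ℂ) 1 1 ≠ 0) :
    psiTwist s (g : Matrix (Fin 2) (Fin 2) ℂ)
        (moebius (h : Matrix (Fin 2) (Fin 2) ℂ) z)
        (psiTwist s (h : Matrix (Fin 2) (Fin 2) ℂ) z ξ) =
      psiTwist s ((g * h : Matrix.SpecialLinearGroup (Fin 2) ℂ) :
        Matrix (Fin 2) (Fin 2) ℂ) z ξ :=
  psiTwist_cocycle_general s g h z ξ hh
end

section
/- Let s, w ∈ ℂ and z ∈ ℂ with z ≠ 0. Set σ := [[0, 1], [−1, 0]], z_σ := −1/z, w_σ := z²w + z, Λ := [[s/2, 0], [0, −s/2]], u_z := [[1, z], [0, 1]], u⁻_w := [[1, 0], [w, 1]], u_{z_σ} := [[1, z_σ], [0, 1]], and u⁻_{w_σ} := [[1, 0], [w_σ, 1]]. Then (σ·u_{z_σ}·u⁻_{w_σ})·Λ·(σ·u_{z_σ}·u⁻_{w_σ})⁻¹ = (u_z·u⁻_w)·Λ·(u_z·u⁻_w)⁻¹. -/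
open Matrix

/-- Compatibility `μ_{λ;σ} = μ_{λ;e}` on the overlap of the two charts of
`ℂP¹ = SL₂(ℂ)/Q`, where `z_σ = −1/z` and `w_σ = z²w + z`. -/
theorem sl2_chart_compatibility (s w : ℂ) (z : ℂ) (hz : z ≠ 0) :
    let σ : Matrix (Fin 2) (Fin 2) ℂ := !![0, 1; -1, 0]
    let zσ : ℂ := -(1 / z)
    let wσ : ℂ := z ^ 2 * w + z
    let Λ : Matrix (Fin 2) (Fin 2) ℂ := !![s / 2, 0; 0, -(s / 2)]
    let uz : Matrix (Fin 2) (Fin 2) ℂ := !![1, z; 0, 1]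
    let uw : Matrix (Fin 2) (Fin 2) ℂ := !![1, 0; w, 1]
    let uzσ : Matrix (Fin 2) (Fin 2) ℂ := !![1, zσ; 0, 1]
    let uwσ : Matrix (Fin 2) (Fin 2) ℂ := !![1, 0; wσ, 1]
    (σ * uzσ * uwσ) * Λ * (σ * uzσ * uwσ)⁻¹ =
      (uz * uw) * Λ * (uz * uw)⁻¹ := by
  intro σ zσ wσ Λ uz uw uzσ uwσ
  have hA : (σ * uzσ * uwσ)⁻¹ = !![-zσ, -1; 1 + zσ * wσ, wσ] := by
    apply Matrix.inv_eq_right_inv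
    simp only [σ, uzσ, uwσ, Matrix.mul_fin_two]
    ext i j
    fin_cases i <;> fin_cases j <;>
      · simp [Matrix.one_apply]
        try ring
  have hB : (uz * uw)⁻¹ = !![1, -z; -w, 1 + z * w] := by
    apply Matrix.inv_eq_right_inv
    simp only [uz, uw, Matrix.mul_fin_two]
    ext i j
    fin_cases i <;> fin_cases j <;>
      · simp [Matrix.one_apply]
        try ring
  have hA2 : σ * uzσ * uwσ = !![wσ, 1; -(1 + zσ * wσ), -zσ] := by
    simp only [σ, uzσ, uwσ, Matrix.mul_fin_two]
    ext i j
    fin_cases i <;> fin_cases j <;>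
      · simp
        try ring
  have hB2 : uz * uw = !![1 + z * w, z; w, 1] := by
    simp only [uz, uw, Matrix.mul_fin_two]
    ext i j
    fin_cases i <;> fin_cases j <;>
      · simp
        try ring
  have key : ∀ a b c d : ℂ, !![a, b; c, d] * Λ * !![d, -b; -c, a] =
      !![s / 2 * (a * d + b * c), -(s * a * b); s * c * d,
        -(s / 2 * (a * d + b * c))] := by
    intro a b c d
    simp only [Λ, Matrix.mul_fin_two]
    ext i j
    fin_cases i <;> fin_cases j <;>
      · simp
        ring
  rw [hA, hA2, hB, hB2]
  have e1 : !![-zσ, -1; 1 + zσ * wσ, wσ] = !![-zσ, -(1); -(-(1 + zσ * wσ)), wσ] := by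
    norm_num
  have e2 : !![1, -z; -w, 1 + z * w] = !![1, -z; -w, 1 + z * w] := rfl
  rw [e1, key wσ 1 (-(1 + zσ * wσ)) (-zσ), key (1 + z * w) z w 1]
  have h00 : s / 2 * (wσ * -zσ + 1 * -(1 + zσ * wσ)) =
      s / 2 * ((1 + z * w) * 1 + z * w) := by
    simp only [zσ, wσ]; field_simp; ring
  have h01 : -(s * wσ * 1) = -(s * (1 + z * w) * z) := by
    simp only [zσ, wσ]; ring
  have h10 : s * -(1 + zσ * wσ) * -zσ = s * w * 1 := by
    simp only [zσ, wσ]; field_simp; ring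
  rw [h00, h01, h10]
end

section
/- Let s ∈ ℂ with s ≠ 0. Define functions a, b, c : ℂ × ℂ → ℂ by a(z, w) = (s/2)(1 + 2zw), b(z, w) = −sz(1 + zw), c(z, w) = sw, and for two such functions f, g let J(f, g) := (∂f/∂z)(∂g/∂w) − (∂f/∂w)(∂g/∂z) (partial derivatives with respect to the two complex variables). Then at every point (z, w) ∈ ℂ²: (2/s²)·(a·J(b, c) − b·J(a, c) + c·J(a, b)) = −s. -/
/-- The "Jacobian bracket" `J(f, g) = (∂f/∂z)(∂g/∂w) − (∂f/∂w)(∂g/∂z)` of two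
functions of two complex variables. -/
noncomputable def Jbracket (f g : ℂ → ℂ → ℂ) (z w : ℂ) : ℂ :=
  deriv (fun x => f x w) z * deriv (fun y => g z y) w -
    deriv (fun y => f z y) w * deriv (fun x => g x w) z

/-- The pullback of the Kirillov–Kostant–Souriau symplectic form
`ω_λ = (2/s²)(a db∧dc − b da∧dc + c da∧db)` on the adjoint orbit of
`diag(s/2, −s/2)` under the twisted moment map equals `−s dz∧dw`:
the coefficient identity. -/
theorem sl2_moment_map_symplectic (s : ℂ) (hs : s ≠ 0) (z w : ℂ) :
    let a : ℂ → ℂ → ℂ := fun z w => (s / 2) * (1 + 2 * z * w)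
    let b : ℂ → ℂ → ℂ := fun z w => -s * z * (1 + z * w)
    let c : ℂ → ℂ → ℂ := fun _ w => s * w
    (2 / s ^ 2) *
        (a z w * Jbracket b c z w - b z w * Jbracket a c z w +
          c z w * Jbracket a b z w) = -s := by
  intro a b c
  have haz : deriv (fun x : ℂ => (s / 2) * (1 + 2 * x * w)) z = (s / 2) * (2 * w) := by
    have h : HasDerivAt (fun x : ℂ => (s / 2) * (1 + 2 * x * w))
        ((s / 2) * (2 * w)) z := by
      have := (((hasDerivAt_id z).const_mul (2 : ℂ)).mul_const w).const_add (1 : ℂ)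
      simpa [mul_assoc] using this.const_mul (s / 2)
    exact h.deriv
  have haw : deriv (fun y : ℂ => (s / 2) * (1 + 2 * z * y)) w = (s / 2) * (2 * z) := by
    have h : HasDerivAt (fun y : ℂ => (s / 2) * (1 + 2 * z * y))
        ((s / 2) * (2 * z)) w := by
      have := ((hasDerivAt_id w).const_mul (2 * z)).const_add (1 : ℂ)
      simpa [mul_assoc] using this.const_mul (s / 2)
    exact h.deriv
  have hbz : deriv (fun x : ℂ => -s * x * (1 + x * w)) z
      = -s * (1 + z * w) + -s * z * w := by
    have h1 : HasDerivAt (fun x : ℂ => -s * x) (-s) z := by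
      simpa using (hasDerivAt_id z).const_mul (-s)
    have h2 : HasDerivAt (fun x : ℂ => 1 + x * w) w z := by
      simpa using ((hasDerivAt_id z).mul_const w).const_add (1 : ℂ)
    exact (h1.mul h2).deriv
  have hbw : deriv (fun y : ℂ => -s * z * (1 + z * y)) w = -s * z * z := by
    have h : HasDerivAt (fun y : ℂ => -s * z * (1 + z * y)) (-s * z * z) w := by
      have := ((hasDerivAt_id w).const_mul z).const_add (1 : ℂ)
      simpa [mul_assoc] using this.const_mul (-s * z)
    exact h.deriv
  have hcz : deriv (fun _ : ℂ => s * w) z = 0 := deriv_const z _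
  have hcw : deriv (fun y : ℂ => s * y) w = s := by
    have h : HasDerivAt (fun y : ℂ => s * y) s w := by
      simpa using (hasDerivAt_id w).const_mul s
    exact h.deriv
  simp only [Jbracket, a, b, c, haz, haw, hbz, hbw, hcz, hcw]
  field_simp
  ring
end

section
/- Let p, q ≥ 1, α, β ∈ ℂ, and let a, b, c, d, z, w be complex matrices of sizes p×p, p×q, q×p, q×q, p×q, q×p respectively. Assume g := fromBlocks a b c d is invertible, cz + d is invertible, and â := a − (az + b)(cz + d)⁻¹c is invertible. Set λ∨ := fromBlocks (α·1_p) 0 0 (β·1_q), ẑ := (az + b)(cz + d)⁻¹, ŵ := (c + (cz + d)w)â⁻¹, u := fromBlocks 1 z 0 1 · fromBlocks 1 0 w 1, and û := fromBlocks 1 ẑ 0 1 · fromBlocks 1 0 ŵ 1. Then g·(u·λ∨·u⁻¹)·g⁻¹ = û·λ∨·û⁻¹. -/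
open Matrix

/-- Abstract conjugation lemma: if `g·u = v·t` with `t` invertible and commuting
with `L`, then `Ad(g)(Ad(u)L) = Ad(v)L`. -/
lemma grassmannian_equivariance_aux {n : Type*} [Fintype n] [DecidableEq n]
    (g u t L v : Matrix n n ℂ) (ht : IsUnit t)
    (hfact : g * u = v * t) (hcomm : t * L = L * t) :
    g * (u * L * u⁻¹) * g⁻¹ = v * L * v⁻¹ := by
  have htd : IsUnit t.det := (isUnit_iff_isUnit_det t).mp ht
  have hv : v = g * u * t⁻¹ := by
    rw [hfact, mul_assoc, mul_nonsing_inv _ htd, mul_one]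
  have hLt : t⁻¹ * L * t = L := by
    rw [mul_assoc, ← hcomm, ← mul_assoc, nonsing_inv_mul _ htd, one_mul]
  rw [hv, Matrix.mul_inv_rev, Matrix.mul_inv_rev, nonsing_inv_nonsing_inv _ htd]
  calc g * (u * L * u⁻¹) * g⁻¹
      = g * u * (t⁻¹ * L * t) * (u⁻¹ * g⁻¹) := by rw [hLt]; noncomm_ring
    _ = g * u * t⁻¹ * L * (t * (u⁻¹ * g⁻¹)) := by noncomm_ring

/-- `G`-equivariance of the twisted moment map in the Grassmannian case:
`Ad(g)(Ad(u)λ∨) = Ad(û)λ∨`, where `û` is obtained from the Gauss factorization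
`g·u = û·t` with `t = fromBlocks â 0 0 (cz+d)` commuting with `λ∨`. -/
theorem grassmannian_equivariance (p q : ℕ) (hp : 1 ≤ p) (hq : 1 ≤ q)
    (α β : ℂ)
    (a : Matrix (Fin p) (Fin p) ℂ) (b : Matrix (Fin p) (Fin q) ℂ)
    (c : Matrix (Fin q) (Fin p) ℂ) (d : Matrix (Fin q) (Fin q) ℂ)
    (z : Matrix (Fin p) (Fin q) ℂ) (w : Matrix (Fin q) (Fin p) ℂ)
    (hg : IsUnit (fromBlocks a b c d))
    (hcd : IsUnit (c * z + d))
    (hat : IsUnit (a - (a * z + b) * (c * z + d)⁻¹ * c)) :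
    let lamv : Matrix (Fin p ⊕ Fin q) (Fin p ⊕ Fin q) ℂ :=
      fromBlocks (α • (1 : Matrix (Fin p) (Fin p) ℂ)) 0 0
        (β • (1 : Matrix (Fin q) (Fin q) ℂ))
    let zHat : Matrix (Fin p) (Fin q) ℂ := (a * z + b) * (c * z + d)⁻¹
    let wHat : Matrix (Fin q) (Fin p) ℂ :=
      (c + (c * z + d) * w) * (a - (a * z + b) * (c * z + d)⁻¹ * c)⁻¹
    let u : Matrix (Fin p ⊕ Fin q) (Fin p ⊕ Fin q) ℂ :=
      fromBlocks 1 z 0 1 * fromBlocks 1 0 w 1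
    let uHat : Matrix (Fin p ⊕ Fin q) (Fin p ⊕ Fin q) ℂ :=
      fromBlocks 1 zHat 0 1 * fromBlocks 1 0 wHat 1
    fromBlocks a b c d * (u * lamv * u⁻¹) * (fromBlocks a b c d)⁻¹ =
      uHat * lamv * uHat⁻¹ := by
  show fromBlocks a b c d *
      (fromBlocks 1 z 0 1 * fromBlocks 1 0 w 1 *
        fromBlocks (α • (1 : Matrix (Fin p) (Fin p) ℂ)) 0 0
          (β • (1 : Matrix (Fin q) (Fin q) ℂ)) *
        (fromBlocks 1 z 0 1 * fromBlocks 1 0 w 1)⁻¹) *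
      (fromBlocks a b c d)⁻¹ =
    fromBlocks 1 ((a * z + b) * (c * z + d)⁻¹) 0 1 *
        fromBlocks 1 0
          ((c + (c * z + d) * w) * (a - (a * z + b) * (c * z + d)⁻¹ * c)⁻¹) 1 *
        fromBlocks (α • (1 : Matrix (Fin p) (Fin p) ℂ)) 0 0
          (β • (1 : Matrix (Fin q) (Fin q) ℂ)) *
      (fromBlocks 1 ((a * z + b) * (c * z + d)⁻¹) 0 1 *
        fromBlocks 1 0
          ((c + (c * z + d) * w) * (a - (a * z + b) * (c * z + d)⁻¹ * c)⁻¹) 1)⁻¹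
  set A := a - (a * z + b) * (c * z + d)⁻¹ * c with hA
  set Z := (a * z + b) * (c * z + d)⁻¹ with hZ
  set W := (c + (c * z + d) * w) * A⁻¹ with hW
  have hcd' : (c * z + d)⁻¹ * (c * z + d) = 1 :=
    nonsing_inv_mul _ ((isUnit_iff_isUnit_det _).mp hcd)
  have hA' : A⁻¹ * A = 1 := nonsing_inv_mul _ ((isUnit_iff_isUnit_det _).mp hat)
  have h1 : Z * (c * z + d) = a * z + b := by
    rw [hZ, Matrix.mul_assoc, hcd', Matrix.mul_one]
  have h2 : W * A = c + (c * z + d) * w := by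
    rw [hW, Matrix.mul_assoc, hA', Matrix.mul_one]
  have htu : IsUnit (fromBlocks A 0 0 (c * z + d) :
      Matrix (Fin p ⊕ Fin q) (Fin p ⊕ Fin q) ℂ) := by
    rw [isUnit_iff_isUnit_det, det_fromBlocks_zero₂₁]
    exact ((isUnit_iff_isUnit_det _).mp hat).mul ((isUnit_iff_isUnit_det _).mp hcd)
  refine grassmannian_equivariance_aux _ _ (fromBlocks A 0 0 (c * z + d)) _ _ htu ?_ ?_
  · -- Gauss factorization
    simp only [fromBlocks_multiply, mul_zero, zero_mul, add_zero, zero_add,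
      mul_one, one_mul, Matrix.mul_zero, Matrix.zero_mul, Matrix.mul_one,
      Matrix.one_mul]
    rw [add_mul, Matrix.one_mul, Matrix.mul_assoc Z W A, h2, hA,
      Matrix.mul_add Z c ((c * z + d) * w),
      ← Matrix.mul_assoc Z (c * z + d) w, h1,
      Matrix.add_mul (a * z) b w,
      Matrix.mul_add a 1 (z * w), Matrix.mul_one, ← Matrix.mul_assoc a z w,
      Matrix.mul_add c 1 (z * w), Matrix.mul_one, ← Matrix.mul_assoc c z w,
      Matrix.add_mul (c * z) d w, add_assoc c (c * z * w) (d * w),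
      ← add_assoc (a - Z * c) (Z * c), sub_add_cancel, add_assoc a (a * z * w) (b * w)]
  · -- t commutes with lamv
    rw [fromBlocks_multiply, fromBlocks_multiply]
    simp [mul_smul_comm, smul_mul_assoc]
end
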